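/- arXiv:2501.00897 — 4 statements merged into one kernel-verified Lean document; each statement's English description precedes it below -/
import Mathlib

section
/- The norm on H₋ is characterized by a limit of resolvents: for f in L²₀, ‖f‖₋² = lim_{λ↓0} ⟨f, (λI + S)^{-1} f⟩, where the limit exists in [0,∞] and is finite exactly when f ∈ Dom(S^{-1/2}), in which case it equals ‖S^{-1/2} f‖². -/
/-!
Write `R λ = (λ + S)⁻¹` and `φ λ = ⟪f, R λ f⟫`. Since `S` is self-adjoint with trivial kernel, it
has dense range, and the operators `λ R λ`, all of norm at most `1`, tend strongly to `0` as
`λ ↓ 0`: on `Ran S` this follows from `λ R λ (S y) = λ (y - λ R λ y)`. For `f = Q g` one has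
`φ λ = ‖g‖² - ⟪g, λ R λ g⟫ → ‖g‖²`. In general `φ` is antitone and
`‖Q (R λ f) - Q (R μ f)‖² ≤ φ λ - φ μ` for `λ ≤ μ`, so if `φ` stays bounded then `Q (R λ f)` is
Cauchy as `λ ↓ 0`, and its limit `g` satisfies `Q g = lim S (R λ f) = lim (f - λ R λ f) = f`.
-/

open Filter Set Topology RealInnerProductSpace

lemma AntitoneOn.tendsto_nhdsGT_atTop {α β : Type*} [LinearOrder α] [TopologicalSpace α]
    [OrderTopology α] [LinearOrder β] {φ : α → β} {a : α} (hφ : AntitoneOn φ (Ioi a))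
    (h : ¬BddAbove (φ '' Ioi a)) : Tendsto φ (𝓝[>] a) atTop := by
  refine tendsto_atTop.2 fun b => ?_
  obtain ⟨_, ⟨y, hy, rfl⟩, hby⟩ := not_bddAbove_iff.1 h b
  filter_upwards [Ioo_mem_nhdsGT hy] with x hx
  exact hby.le.trans (hφ hx.1 hy hx.2.le)

lemma cauchy_map_of_sq_norm_sub_le {ι E : Type*} [SeminormedAddCommGroup E] {l : Filter ι}
    [l.NeBot] {u : ι → E} {φ : ι → ℝ} {L : ℝ} (hφ : Tendsto φ l (𝓝 L))
    (hu : ∀ᶠ p in l ×ˢ l, ‖u p.1 - u p.2‖ ^ 2 ≤ |φ p.1 - φ p.2|) : Cauchy (map u l) := by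
  rw [IsUniformAddGroup.cauchy_map_iff_tendsto]
  refine ⟨‹_›, tendsto_zero_iff_norm_tendsto_zero.2 ?_⟩
  have hgap : Tendsto (fun p : ι × ι => √|φ p.1 - φ p.2|) (l ×ˢ l) (𝓝 0) := by
    simpa using (((hφ.comp tendsto_fst).sub (hφ.comp tendsto_snd)).abs).sqrt
  exact squeeze_zero' (.of_forall fun _ => norm_nonneg _)
    (hu.mono fun p hp => Real.le_sqrt_of_sq_le hp) hgap

lemma isClosed_setOf_tendsto_zero_of_norm_le {ι 𝕜 E F : Type*} [NontriviallyNormedField 𝕜]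
    [SeminormedAddCommGroup E] [NormedSpace 𝕜 E] [SeminormedAddCommGroup F] [NormedSpace 𝕜 F]
    {l : Filter ι} {T : ι → E →L[𝕜] F} {C : ℝ} (hT : ∀ᶠ i in l, ‖T i‖ ≤ C) :
    IsClosed {x | Tendsto (fun i => T i x) l (𝓝 0)} := by
  let T' : {i // ‖T i‖ ≤ C} → E →L[𝕜] F := fun i => T i
  have hT' : Equicontinuous ((↑) ∘ T') := by
    have := (NormedSpace.equicontinuous_TFAE T').out 5 1
    exact this.1 ⟨C, fun i => i.2⟩
  have hrange : Set.range ((↑) : {i // ‖T i‖ ≤ C} → ι) ∈ l := by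
    rw [Subtype.range_coe_subtype]
    exact hT
  have := hT'.isClosed_setOfPred_tendsto (l := comap (↑) l) (f := 0) continuous_const
  simp only [T', Function.comp_apply] at this
  convert this using 3 with x
  exact (tendsto_comap'_iff (m := fun i => T i x) hrange).symm

lemma IsSelfAdjoint.denseRange_of_ker_eq_bot {𝕜 H : Type*} [RCLike 𝕜] [NormedAddCommGroup H]
    [InnerProductSpace 𝕜 H] [CompleteSpace H] {T : H →L[𝕜] H} (hT : IsSelfAdjoint T)
    (hker : LinearMap.ker (T : H →ₗ[𝕜] H) = ⊥) : DenseRange T := by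
  have := Submodule.topologicalClosure_eq_top_iff.2 (hT.isSymmetric.orthogonal_range.trans hker)
  simpa [DenseRange, LinearMap.coe_range] using Submodule.dense_iff_topologicalClosure_eq_top.2 this


lemma norm_apply_sq_eq_inner_of_comp_self_eq {H : Type*} [NormedAddCommGroup H]
    [InnerProductSpace ℝ H] {Q S : H →L[ℝ] H} (hQ : (Q : H →ₗ[ℝ] H).IsSymmetric)
    (hQS : Q ∘L Q = S) (x : H) : ‖Q x‖ ^ 2 = ⟪S x, x⟫ := by
  rw [← real_inner_self_eq_norm_sq, ← hQS]
  exact (hQ x (Q x)).trans (real_inner_comm _ _)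

section Resolvent

variable {H : Type*} [NormedAddCommGroup H] [InnerProductSpace ℝ H]
  {S R : H →L[ℝ] H} {l : ℝ}

lemma smul_apply_add_apply_of_comp_eq_one (hR : (l • 1 + S) ∘L R = 1) (x : H) :
    l • R x + S (R x) = x := by
  simpa using DFunLike.congr_fun hR x

lemma apply_smul_add_apply_of_comp_eq_one (hR : R ∘L (l • 1 + S) = 1) (x : H) :
    R (l • x + S x) = x := by
  simpa using DFunLike.congr_fun hR x

lemma apply_map_eq_sub_of_comp_eq_one (hR : R ∘L (l • 1 + S) = 1) (x : H) :
    R (S x) = x - l • R x := by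
  rw [eq_sub_iff_add_eq', ← map_smul, ← map_add, apply_smul_add_apply_of_comp_eq_one hR]

lemma apply_comm_of_comp_eq_one (hR : (l • 1 + S) ∘L R = 1) (hR' : R ∘L (l • 1 + S) = 1)
    {T : H →L[ℝ] H} (hT : Commute T S) (x : H) : R (T x) = T (R x) := by
  have hTS : T (S (R x)) = S (T (R x)) := DFunLike.congr_fun hT.eq (R x)
  conv_lhs => rw [← smul_apply_add_apply_of_comp_eq_one hR x, map_add, map_smul, hTS]
  exact apply_smul_add_apply_of_comp_eq_one hR' _

lemma inner_apply_eq_of_comp_eq_one (hR : (l • 1 + S) ∘L R = 1) (x : H) :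
    ⟪x, R x⟫ = l * ‖R x‖ ^ 2 + ⟪S (R x), R x⟫ := by
  calc ⟪x, R x⟫ = ⟪l • R x + S (R x), R x⟫ := by rw [smul_apply_add_apply_of_comp_eq_one hR]
    _ = _ := by rw [inner_add_left, real_inner_smul_left, real_inner_self_eq_norm_sq]

lemma mul_norm_apply_le_of_comp_eq_one (hS : S.IsPositive) (hR : (l • 1 + S) ∘L R = 1)
    (x : H) : l * ‖R x‖ ≤ ‖x‖ := by
  have hsq : l * ‖R x‖ * ‖R x‖ ≤ ‖x‖ * ‖R x‖ := by
    nlinarith [inner_apply_eq_of_comp_eq_one hR x, hS.inner_nonneg_left (R x),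
      real_inner_le_norm x (R x)]
  rcases (norm_nonneg (R x)).eq_or_lt with h | h
  · simp [← h]
  · exact le_of_mul_le_mul_right hsq h

lemma norm_smul_le_one_of_comp_eq_one (hS : S.IsPositive) (hl : 0 ≤ l)
    (hR : (l • 1 + S) ∘L R = 1) : ‖l • R‖ ≤ 1 := by
  refine ContinuousLinearMap.opNorm_le_bound _ zero_le_one fun x => ?_
  rw [smul_apply, norm_smul, Real.norm_of_nonneg hl, one_mul]
  exact mul_norm_apply_le_of_comp_eq_one hS hR x

lemma norm_smul_apply_map_le_of_comp_eq_one (hS : S.IsPositive) (hl : 0 ≤ l)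
    (hR : (l • 1 + S) ∘L R = 1) (hR' : R ∘L (l • 1 + S) = 1) (x : H) :
    ‖l • R (S x)‖ ≤ 2 * l * ‖x‖ := by
  have hx : ‖l • R x‖ ≤ ‖x‖ := by
    rw [norm_smul, Real.norm_of_nonneg hl]
    exact mul_norm_apply_le_of_comp_eq_one hS hR x
  calc ‖l • R (S x)‖ = l * ‖x - l • R x‖ := by
        rw [apply_map_eq_sub_of_comp_eq_one hR', norm_smul, Real.norm_of_nonneg hl]
    _ ≤ l * (‖x‖ + ‖x‖) := by gcongr; exact (norm_sub_le _ _).trans (by gcongr)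
    _ = 2 * l * ‖x‖ := by ring

lemma inner_map_sub_le_of_comp_eq_one (hS : (S : H →ₗ[ℝ] H).IsSymmetric) {μ : ℝ}
    {R' : H →L[ℝ] H} (hl : 0 ≤ l) (hlμ : l ≤ μ) (hR : (l • 1 + S) ∘L R = 1)
    (hR' : (μ • 1 + S) ∘L R' = 1) (f : H) :
    ⟪S (R f - R' f), R f - R' f⟫ ≤ ⟪f, R f⟫ - ⟪f, R' f⟫ := by
  set u := R f
  set v := R' f
  have hu : ⟪f, u⟫ = l * ‖u‖ ^ 2 + ⟪S u, u⟫ := inner_apply_eq_of_comp_eq_one hR f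
  have hv : ⟪f, v⟫ = μ * ‖v‖ ^ 2 + ⟪S v, v⟫ := inner_apply_eq_of_comp_eq_one hR' f
  have huv : ⟪f, v⟫ = l * ⟪u, v⟫ + ⟪S u, v⟫ := by
    rw [← smul_apply_add_apply_of_comp_eq_one hR f, inner_add_left, real_inner_smul_left]
  have hsymm : ⟪S v, u⟫ = ⟪S u, v⟫ := (hS v u).trans (real_inner_comm _ _)
  have hSuv : ⟪S (u - v), u - v⟫ = ⟪S u, u⟫ - 2 * ⟪S u, v⟫ + ⟪S v, v⟫ := by
    rw [map_sub, inner_sub_left, inner_sub_right, inner_sub_right, hsymm]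
    ring
  -- the defect is `l * ‖u - v‖ ^ 2 + (μ - l) * ‖v‖ ^ 2`
  nlinarith [norm_sub_sq_real u v, mul_nonneg hl (sq_nonneg ‖u - v‖),
    mul_nonneg (sub_nonneg.2 hlμ) (sq_nonneg ‖v‖)]

lemma inner_map_apply_map_eq_of_comp_eq_one {Q : H →L[ℝ] H} (hQ : (Q : H →ₗ[ℝ] H).IsSymmetric)
    (hQS : Q ∘L Q = S) (hR : (l • 1 + S) ∘L R = 1) (hR' : R ∘L (l • 1 + S) = 1) (g : H) :
    ⟪Q g, R (Q g)⟫ = ‖g‖ ^ 2 - ⟪g, l • R g⟫ := by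
  have hcomm : Commute Q S := by rw [← hQS]; exact (Commute.refl Q).mul_right (Commute.refl Q)
  have hSR : S (R g) = g - l • R g :=
    eq_sub_of_add_eq' (smul_apply_add_apply_of_comp_eq_one hR g)
  calc ⟪Q g, R (Q g)⟫ = ⟪g, (Q ∘L Q) (R g)⟫ := by
        rw [apply_comm_of_comp_eq_one hR hR' hcomm]; exact hQ _ _
    _ = ‖g‖ ^ 2 - ⟪g, l • R g⟫ := by
        rw [hQS, hSR, inner_sub_right, real_inner_self_eq_norm_sq]

lemma sq_norm_map_sub_le_abs_inner_sub_of_comp_eq_one (hS : (S : H →ₗ[ℝ] H).IsSymmetric)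
    {Q : H →L[ℝ] H} (hQ : (Q : H →ₗ[ℝ] H).IsSymmetric) (hQS : Q ∘L Q = S) {μ : ℝ}
    {R' : H →L[ℝ] H} (hl : 0 ≤ l) (hμ : 0 ≤ μ) (hR : (l • 1 + S) ∘L R = 1)
    (hR' : (μ • 1 + S) ∘L R' = 1) (f : H) :
    ‖Q (R f) - Q (R' f)‖ ^ 2 ≤ |⟪f, R f⟫ - ⟪f, R' f⟫| := by
  rw [← map_sub, norm_apply_sq_eq_inner_of_comp_self_eq hQ hQS]
  rcases le_total l μ with hlμ | hμl
  · exact (inner_map_sub_le_of_comp_eq_one hS hl hlμ hR hR' f).trans (le_abs_self _)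
  · rw [← neg_sub, map_neg, inner_neg_left, inner_neg_right, neg_neg, abs_sub_comm]
    exact (inner_map_sub_le_of_comp_eq_one hS hμ hμl hR' hR f).trans (le_abs_self _)

end Resolvent

section ResolventFamily

variable {H : Type*} [NormedAddCommGroup H] [InnerProductSpace ℝ H]
  {S Q : H →L[ℝ] H} {R : ℝ → H →L[ℝ] H}

theorem tendsto_smul_apply_nhdsGT_zero [CompleteSpace H] (hS : S.IsPositive)
    (hker : LinearMap.ker (S : H →ₗ[ℝ] H) = ⊥)
    (hR : ∀ l : ℝ, 0 < l → (l • 1 + S) ∘L R l = 1 ∧ R l ∘L (l • 1 + S) = 1) (x : H) :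
    Tendsto (fun l => l • R l x) (𝓝[>] 0) (𝓝 0) := by
  have hclosed : IsClosed {x | Tendsto (fun l => (l • R l) x) (𝓝[>] 0) (𝓝 0)} :=
    isClosed_setOf_tendsto_zero_of_norm_le (C := 1) <| eventually_nhdsWithin_of_forall
      fun l hl => norm_smul_le_one_of_comp_eq_one hS (le_of_lt hl) (hR l hl).1
  refine (hS.isSelfAdjoint.denseRange_of_ker_eq_bot hker).induction_on x hclosed fun y => ?_
  have hbound : Tendsto (fun l : ℝ => 2 * l * ‖y‖) (𝓝[>] 0) (𝓝 0) :=
    tendsto_nhdsWithin_of_tendsto_nhds <|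
      (by fun_prop : Continuous fun l : ℝ => 2 * l * ‖y‖).tendsto' 0 0 (by simp)
  refine squeeze_zero_norm' ?_ hbound
  filter_upwards [self_mem_nhdsWithin] with l hl
  exact norm_smul_apply_map_le_of_comp_eq_one hS (le_of_lt hl) (hR l hl).1 (hR l hl).2 y

theorem antitoneOn_inner_apply (hS : S.IsPositive)
    (hR : ∀ l : ℝ, 0 < l → (l • 1 + S) ∘L R l = 1) (f : H) :
    AntitoneOn (fun l => ⟪f, R l f⟫) (Ioi 0) := fun l hl μ _ hlμ =>
  sub_nonneg.1 <| (hS.inner_nonneg_left _).trans <|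
    inner_map_sub_le_of_comp_eq_one hS.isSymmetric (le_of_lt hl) hlμ (hR l hl)
      (hR μ (hl.trans_le hlμ)) f

theorem tendsto_inner_map_apply_map_nhdsGT_zero [CompleteSpace H] (hS : S.IsPositive)
    (hker : LinearMap.ker (S : H →ₗ[ℝ] H) = ⊥) (hQ : (Q : H →ₗ[ℝ] H).IsSymmetric)
    (hQS : Q ∘L Q = S)
    (hR : ∀ l : ℝ, 0 < l → (l • 1 + S) ∘L R l = 1 ∧ R l ∘L (l • 1 + S) = 1) (g : H) :
    Tendsto (fun l => ⟪Q g, R l (Q g)⟫) (𝓝[>] 0) (𝓝 (‖g‖ ^ 2)) := by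
  have hlim : Tendsto (fun l => ‖g‖ ^ 2 - ⟪g, l • R l g⟫) (𝓝[>] 0) (𝓝 (‖g‖ ^ 2)) := by
    simpa using tendsto_const_nhds.sub
      (tendsto_const_nhds.inner (𝕜 := ℝ) (tendsto_smul_apply_nhdsGT_zero hS hker hR g))
  refine hlim.congr' ?_
  filter_upwards [self_mem_nhdsWithin] with l hl
  exact (inner_map_apply_map_eq_of_comp_eq_one hQ hQS (hR l hl).1 (hR l hl).2 g).symm

theorem mem_range_of_bddAbove_inner_apply [CompleteSpace H] (hS : S.IsPositive)
    (hker : LinearMap.ker (S : H →ₗ[ℝ] H) = ⊥) (hQ : (Q : H →ₗ[ℝ] H).IsSymmetric)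
    (hQS : Q ∘L Q = S)
    (hR : ∀ l : ℝ, 0 < l → (l • 1 + S) ∘L R l = 1 ∧ R l ∘L (l • 1 + S) = 1) {f : H}
    (hbdd : BddAbove ((fun l => ⟪f, R l f⟫) '' Ioi 0)) : f ∈ range Q := by
  have hconv := (antitoneOn_inner_apply hS (fun l hl => (hR l hl).1) f).tendsto_nhdsGT hbdd
  have hcauchy : Cauchy (map (fun l => Q (R l f)) (𝓝[>] 0)) := by
    refine cauchy_map_of_sq_norm_sub_le hconv ?_
    filter_upwards [prod_mem_prod self_mem_nhdsWithin self_mem_nhdsWithin] with p hp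
    exact sq_norm_map_sub_le_abs_inner_sub_of_comp_eq_one hS.isSymmetric hQ hQS
      (le_of_lt hp.1) (le_of_lt hp.2) (hR p.1 hp.1).1 (hR p.2 hp.2).1 f
  obtain ⟨g, hg⟩ := cauchy_map_iff_exists_tendsto.1 hcauchy
  have hQQ : Tendsto (fun l => Q (Q (R l f))) (𝓝[>] 0) (𝓝 f) := by
    have hlim := tendsto_const_nhds (x := f) |>.sub (tendsto_smul_apply_nhdsGT_zero hS hker hR f)
    rw [sub_zero] at hlim
    refine hlim.congr' ?_
    filter_upwards [self_mem_nhdsWithin] with l hl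
    rw [← ContinuousLinearMap.comp_apply Q Q, hQS]
    exact (eq_sub_of_add_eq' (smul_apply_add_apply_of_comp_eq_one (hR l hl).1 f)).symm
  exact ⟨g, tendsto_nhds_unique ((Q.continuous.tendsto g).comp hg) hQQ⟩

end ResolventFamily

theorem Hminus_norm_resolvent_characterisation_general
    (H : Type*) [NormedAddCommGroup H] [InnerProductSpace ℝ H] [CompleteSpace H]
    (S : H →L[ℝ] H) (hSsa : IsSelfAdjoint S)
    (hSpos : ∀ f : H, 0 ≤ ⟪S f, f⟫)
    (hSker : LinearMap.ker (S : H →ₗ[ℝ] H) = ⊥)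
    (Q : H →L[ℝ] H) (hQsa : IsSelfAdjoint Q)
    (hQsq : Q ∘L Q = S)
    (Rres : ℝ → H →L[ℝ] H)
    (hRres : ∀ l : ℝ, 0 < l →
      (l • (1 : H →L[ℝ] H) + S) ∘L Rres l = 1 ∧ Rres l ∘L (l • (1 : H →L[ℝ] H) + S) = 1)
    (f : H) :
    (∀ g : H, f = Q g →
      Tendsto (fun l : ℝ => ⟪f, Rres l f⟫) (nhdsWithin 0 (Set.Ioi 0)) (𝓝 (‖g‖ ^ 2))) ∧
    (f ∉ Set.range Q →
      Tendsto (fun l : ℝ => ⟪f, Rres l f⟫) (nhdsWithin 0 (Set.Ioi 0)) atTop) := by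
  have hS : S.IsPositive := (ContinuousLinearMap.isPositive_iff' S).2 ⟨hSsa, hSpos⟩
  refine ⟨fun g hg => ?_, fun hf => ?_⟩
  · subst hg
    exact tendsto_inner_map_apply_map_nhdsGT_zero hS hSker hQsa.isSymmetric hQsq hRres g
  · exact (antitoneOn_inner_apply hS (fun l hl => (hRres l hl).1) f).tendsto_nhdsGT_atTop
      fun hbdd => hf (mem_range_of_bddAbove_inner_apply hS hSker hQsa.isSymmetric hQsq hRres hbdd)

/-- for a bounded nonnegative self-adjoint operator `S` with trivial kernel,
with nonnegative square root `Q` (`Q² = S`, so `Dom(S^{-1/2}) = Ran Q`) and resolvents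
`Rres λ = (λI + S)⁻¹`, the limit `lim_{λ↓0} ⟨f, (λI+S)^{-1} f⟩` equals `‖S^{-1/2} f‖²`
when `f = Q g ∈ Ran Q = Dom(S^{-1/2})` (in which case `S^{-1/2}f = g`), and the limit is
`+∞` when `f ∉ Ran Q`. -/
theorem Hminus_norm_resolvent_characterisation
    (H : Type*) [NormedAddCommGroup H] [InnerProductSpace ℝ H] [CompleteSpace H]
    (S : H →L[ℝ] H) (hSsa : IsSelfAdjoint S)
    (hSpos : ∀ f : H, 0 ≤ ⟪S f, f⟫)
    (hSker : LinearMap.ker (S : H →ₗ[ℝ] H) = ⊥)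
    (Q : H →L[ℝ] H) (hQsa : IsSelfAdjoint Q)
    (hQpos : ∀ f : H, 0 ≤ ⟪Q f, f⟫)
    (hQsq : Q ∘L Q = S)
    (Rres : ℝ → H →L[ℝ] H)
    (hRres : ∀ l : ℝ, 0 < l →
      (l • (1 : H →L[ℝ] H) + S) ∘L Rres l = 1 ∧ Rres l ∘L (l • (1 : H →L[ℝ] H) + S) = 1)
    (f : H) :
    (∀ g : H, f = Q g →
      Tendsto (fun l : ℝ => ⟪f, Rres l f⟫) (nhdsWithin 0 (Set.Ioi 0)) (𝓝 (‖g‖ ^ 2))) ∧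
    (f ∉ Set.range Q →
      Tendsto (fun l : ℝ => ⟪f, Rres l f⟫) (nhdsWithin 0 (Set.Ioi 0)) atTop) :=
  Hminus_norm_resolvent_characterisation_general H S hSsa hSpos hSker Q hQsa hQsq Rres hRres f
end

section
/- For any vector field w in K (satisfying u_k(ω)+u_l(τ_k ω) = u_l(ω)+u_k(τ_l ω) for all unit vectors k,l), the identity Σ_{k∈U} b_k w_k = ∇* H w holds, where (Hu)_k := (1/2) Σ_{l∈U} h_{k,l} (∂_k + 2I) u_l and b_k = Σ_l h_{k,l}. -/
open MeasureTheory Filter Topology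

/-- The unit vector of `ℤ^d` indexed by a coordinate and a sign. -/
def unitVec (d : ℕ) (k : Fin d × Bool) : Fin d → ℤ :=
  fun j => if j = k.1 then (if k.2 then 1 else -1) else 0

/-- Negation `k ↦ -k` on the index set `U` of unit vectors. -/
def negU {d : ℕ} (k : Fin d × Bool) : Fin d × Bool := (k.1, !k.2)

/-- The operator `H` on vector fields: `(Hu)_k = (1/2) ∑_l h_{k,l} (∂_k + 2I) u_l`. -/
noncomputable def Hop (d : ℕ) {Ω : Type*} (τ : (Fin d → ℤ) → Ω → Ω)
    (h : (Fin d × Bool) → (Fin d × Bool) → Ω → ℝ)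
    (u : (Fin d × Bool) → Ω → ℝ) (k : Fin d × Bool) (ω : Ω) : ℝ :=
  (1/2) * ∑ l : Fin d × Bool,
    h k l ω * ((u l (τ (unitVec d k) ω) - u l ω) + 2 * u l ω)

/-
Reindexing `k ↦ -k` and using `h_{-k,l}(τ_k ω) = -h_{k,l}(ω)` turns `(Hw)_{-k}(τ_k ω)` into
`-(Hw)_k(ω)`, so `∇* H w = -∑_k (Hw)_k`. Writing `w_l(τ_k ω) + w_l(ω)` as
`(w_k(ω) + w_l(τ_k ω)) + (w_k(ω) + w_l(ω)) - 2 w_k(ω)`, the first two brackets are symmetric in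
`(k, l)` (the first because `w` is rotation free), so they pair to zero against the antisymmetric
`h_{k,l}(ω)`, and `∑_{k,l} h_{k,l}(ω) (w_l(τ_k ω) + w_l(ω)) = -2 ∑_k b_k w_k` remains.
-/

theorem Finset.sum_sum_eq_zero_of_antisymm {ι M : Type*} [AddCommGroup M] [IsAddTorsionFree M]
    (s : Finset ι) (F : ι → ι → M) (hF : ∀ i j, F i j = -F j i) :
    ∑ i ∈ s, ∑ j ∈ s, F i j = 0 :=
  self_eq_neg.mp <| calc
    ∑ i ∈ s, ∑ j ∈ s, F i j = ∑ j ∈ s, ∑ i ∈ s, F i j := Finset.sum_comm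
    _ = ∑ j ∈ s, ∑ i ∈ s, -F j i :=
        Finset.sum_congr rfl fun j _ => Finset.sum_congr rfl fun i _ => hF i j
    _ = -∑ i ∈ s, ∑ j ∈ s, F i j := by simp only [Finset.sum_neg_distrib]

theorem Finset.sum_sum_mul_eq_zero_of_antisymm_of_symm {ι R : Type*} [NonUnitalNonAssocRing R]
    [IsAddTorsionFree R] (s : Finset ι) {A S : ι → ι → R} (hA : ∀ i j, A i j = -A j i)
    (hS : ∀ i j, S i j = S j i) :
    ∑ i ∈ s, ∑ j ∈ s, A i j * S i j = 0 :=
  s.sum_sum_eq_zero_of_antisymm _ fun i j => by rw [hA, hS, neg_mul]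

theorem neg_apply_apply_of_map_add {G Ω : Type*} [AddGroup G] {τ : G → Ω → Ω} (hτ0 : τ 0 = id)
    (hτadd : ∀ z w, τ (z + w) = τ z ∘ τ w) (z : G) (ω : Ω) : τ (-z) (τ z ω) = ω := by
  rw [← Function.comp_apply (f := τ (-z)), ← hτadd, neg_add_cancel, hτ0, id]

theorem negU_involutive {d : ℕ} : Function.Involutive (negU (d := d)) := fun k => by
  simp [negU]

theorem unitVec_negU {d : ℕ} (k : Fin d × Bool) : unitVec d (negU k) = -unitVec d k := by
  obtain ⟨i, c⟩ := k
  funext j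
  simp only [unitVec, negU, Pi.neg_apply]
  cases c <;> split <;> simp_all

section Hop

variable {d : ℕ} {Ω : Type*} {τ : (Fin d → ℤ) → Ω → Ω} {h : (Fin d × Bool) → (Fin d × Bool) → Ω → ℝ}

theorem Hop_eq (u : (Fin d × Bool) → Ω → ℝ) (k : Fin d × Bool) (ω : Ω) :
    Hop d τ h u k ω = 1 / 2 * ∑ l, h k l ω * (u l (τ (unitVec d k) ω) + u l ω) := by
  unfold Hop
  congr 1
  exact Finset.sum_congr rfl fun l _ => by ring

theorem Hop_negU_apply_shift (hτ0 : τ 0 = id) (hτadd : ∀ z w, τ (z + w) = τ z ∘ τ w)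
    (hA1 : ∀ k l ω, h k l ω = -h (negU k) l (τ (unitVec d k) ω))
    (u : (Fin d × Bool) → Ω → ℝ) (k : Fin d × Bool) (ω : Ω) :
    Hop d τ h u (negU k) (τ (unitVec d k) ω) = -Hop d τ h u k ω := by
  rw [Hop_eq, Hop_eq, unitVec_negU, neg_apply_apply_of_map_add hτ0 hτadd, ← mul_neg,
    ← Finset.sum_neg_distrib]
  congr 1
  refine Finset.sum_congr rfl fun l _ => ?_
  rw [hA1 k l ω]
  ring

theorem sum_Hop_apply_neg_shift (hτ0 : τ 0 = id) (hτadd : ∀ z w, τ (z + w) = τ z ∘ τ w)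
    (hA1 : ∀ k l ω, h k l ω = -h (negU k) l (τ (unitVec d k) ω))
    (u : (Fin d × Bool) → Ω → ℝ) (ω : Ω) :
    ∑ k, Hop d τ h u k (τ (-unitVec d k) ω) = -∑ k, Hop d τ h u k ω := by
  rw [← Equiv.sum_comp (negU_involutive.toPerm _), ← Finset.sum_neg_distrib]
  refine Finset.sum_congr rfl fun k _ => ?_
  rw [Function.Involutive.coe_toPerm, unitVec_negU, neg_neg,
    Hop_negU_apply_shift hτ0 hτadd hA1]

theorem sum_Hop_eq_neg_sum_mul (hA3 : ∀ k l ω, h k l ω = -h l k ω) {w : (Fin d × Bool) → Ω → ℝ}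
    (hwK : ∀ k l ω, w k ω + w l (τ (unitVec d k) ω) = w l ω + w k (τ (unitVec d l) ω)) (ω : Ω) :
    ∑ k, Hop d τ h w k ω = -∑ k, (∑ l, h k l ω) * w k ω := by
  have hrot := Finset.univ.sum_sum_mul_eq_zero_of_antisymm_of_symm
    (S := fun k l => w k ω + w l (τ (unitVec d k) ω)) (fun k l => hA3 k l ω) (hwK · · ω)
  have hsym := Finset.univ.sum_sum_mul_eq_zero_of_antisymm_of_symm
    (S := fun k l => w k ω + w l ω) (fun k l => hA3 k l ω) fun k l => add_comm _ _
  calc ∑ k, Hop d τ h w k ω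
      = 1 / 2 * ∑ k, ∑ l, (h k l ω * (w k ω + w l (τ (unitVec d k) ω))
          + h k l ω * (w k ω + w l ω) - 2 * (h k l ω * w k ω)) := by
        simp only [Hop_eq, Finset.mul_sum]
        exact Finset.sum_congr rfl fun k _ => Finset.sum_congr rfl fun l _ => by ring
    _ = -∑ k, (∑ l, h k l ω) * w k ω := by
        simp only [Finset.sum_sub_distrib, Finset.sum_add_distrib, hrot, hsym, ← Finset.mul_sum,
          Finset.sum_mul]
        ring

end Hop

theorem divergence_of_H_identity_general
    (d : ℕ) (Ω : Type*)
    (τ : (Fin d → ℤ) → Ω → Ω)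
    (hτ0 : τ 0 = id)
    (hτadd : ∀ z w : Fin d → ℤ, τ (z + w) = τ z ∘ τ w)
    (h : (Fin d × Bool) → (Fin d × Bool) → Ω → ℝ)
    (hA1 : ∀ k l ω, h k l ω = - h (negU k) l (τ (unitVec d k) ω))
    (hA3 : ∀ k l ω, h k l ω = - h l k ω)
    (b : (Fin d × Bool) → Ω → ℝ)
    (hb : ∀ k ω, b k ω = ∑ l : Fin d × Bool, h k l ω)
    (w : (Fin d × Bool) → Ω → ℝ)
    (hwK : ∀ k l ω, w k ω + w l (τ (unitVec d k) ω) = w l ω + w k (τ (unitVec d l) ω)) :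
    ∀ ω : Ω, ∑ k : Fin d × Bool, b k ω * w k ω
      = (1/2) * ∑ k : Fin d × Bool,
          (Hop d τ h w k (τ (-(unitVec d k)) ω) - Hop d τ h w k ω) := by
  intro ω
  rw [Finset.sum_sub_distrib, sum_Hop_apply_neg_shift hτ0 hτadd hA1,
    sum_Hop_eq_neg_sum_mul hA3 hwK]
  simp only [hb]
  ring

/-- for any `w ∈ K` (rotation-free vector field), `∑_k b_k w_k = ∇* H w`,
where `∇*` is the adjoint of `∇`, given by `∇* u = (1/2) ∑_k ∂_{-k} u_k` (which on
antisymmetric fields equals `-∑_k u_k`; the formula `∑_k u_k` in the paper carries a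
sign typo), and `b_k = ∑_l h_{k,l}`. -/
theorem divergence_of_H_identity
    (d : ℕ) (Ω : Type*)
    (τ : (Fin d → ℤ) → Ω → Ω)
    (hτ0 : τ 0 = id)
    (hτadd : ∀ z w : Fin d → ℤ, τ (z + w) = τ z ∘ τ w)
    (h : (Fin d × Bool) → (Fin d × Bool) → Ω → ℝ)
    (hA1 : ∀ k l ω, h k l ω = - h (negU k) l (τ (unitVec d k) ω))
    (hA2 : ∀ k l ω, h k l ω = - h k (negU l) (τ (unitVec d l) ω))
    (hA3 : ∀ k l ω, h k l ω = - h l k ω)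
    (b : (Fin d × Bool) → Ω → ℝ)
    (hb : ∀ k ω, b k ω = ∑ l : Fin d × Bool, h k l ω)
    (w : (Fin d × Bool) → Ω → ℝ)
    (hwV : ∀ k ω, w k ω + w (negU k) (τ (unitVec d k) ω) = 0)
    (hwK : ∀ k l ω, w k ω + w l (τ (unitVec d k) ω) = w l ω + w k (τ (unitVec d l) ω)) :
    ∀ ω : Ω, ∑ k : Fin d × Bool, b k ω * w k ω
      = (1/2) * ∑ k : Fin d × Bool,
          (Hop d τ h w k (τ (-(unitVec d k)) ω) - Hop d τ h w k ω) :=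
  divergence_of_H_identity_general d Ω τ hτ0 hτadd h hA1 hA3 b hb w hwK
end

section
/- The multiplication-type operator H on vector fields defined by (Hu)_k := (1/2) Σ_{l∈U} h_{k,l}(∂_k + 2I) u_l maps the space V of antisymmetric vector fields into itself: if u_k(ω) + u_{-k}(τ_k ω) = 0 a.s. for all k, then (Hu)_k(ω) + (Hu)_{-k}(τ_k ω) = 0 a.s. for all k. -/
open MeasureTheory Filter Topology

/-- `H` maps the space `V` of antisymmetric vector fields into itself:
if `u_k(ω) + u_{-k}(τ_k ω) = 0` then `(Hu)_k(ω) + (Hu)_{-k}(τ_k ω) = 0`. -/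
theorem Hop_preserves_antisymmetry
    (d : ℕ) (Ω : Type*)
    (τ : (Fin d → ℤ) → Ω → Ω)
    (hτ0 : τ 0 = id)
    (hτadd : ∀ z w : Fin d → ℤ, τ (z + w) = τ z ∘ τ w)
    (h : (Fin d × Bool) → (Fin d × Bool) → Ω → ℝ)
    (hA1 : ∀ k l ω, h k l ω = - h (negU k) l (τ (unitVec d k) ω))
    (hA2 : ∀ k l ω, h k l ω = - h k (negU l) (τ (unitVec d l) ω))
    (hA3 : ∀ k l ω, h k l ω = - h l k ω)
    (u : (Fin d × Bool) → Ω → ℝ)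
    (huV : ∀ k ω, u k ω + u (negU k) (τ (unitVec d k) ω) = 0) :
    ∀ k ω, Hop d τ h u k ω + Hop d τ h u (negU k) (τ (unitVec d k) ω) = 0 := by
  intro k ω
  have hinv : τ (unitVec d (negU k)) (τ (unitVec d k) ω) = ω := by
    have hz : unitVec d (negU k) + unitVec d k = 0 := by
      funext j
      simp only [unitVec, negU, Pi.add_apply, Pi.zero_apply]
      by_cases hj : j = k.1 <;> cases k.2 <;> simp [hj]
    have := congrFun (hτadd (unitVec d (negU k)) (unitVec d k)) ω
    rw [hz, hτ0] at this
    simpa using this.symm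
  simp only [Hop, ← mul_add, ← Finset.sum_add_distrib, hinv]
  have : ∀ l : Fin d × Bool,
      h k l ω * (u l (τ (unitVec d k) ω) - u l ω + 2 * u l ω) +
      h (negU k) l (τ (unitVec d k) ω) *
        (u l ω - u l (τ (unitVec d k) ω) + 2 * u l (τ (unitVec d k) ω)) = 0 := by
    intro l
    rw [show h (negU k) l (τ (unitVec d k) ω) = - h k l ω by rw [hA1 k l ω]; ring]
    ring
  rw [Finset.sum_congr rfl fun l _ => this l]
  simp
end

section
/- For a stationary ergodic Markov process with bounded generator L = -S + A (S ≥ 0 self-adjoint, A skew-symmetric) and resolvent R_λ = (λI - L)^{-1}, if the two conditions lim_{λ→0} λ^{1/2}‖R_λ φ‖ = 0 and S^{1/2}R_λ φ → v in L² hold for mean-zero φ, then the limit σ² := 2 lim_{λ→0} ⟨φ, R_λ φ⟩ exists, is finite, and equals 2‖v‖². -/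
open MeasureTheory Filter Topology RealInnerProductSpace

/-- variance identity of the Kipnis–Varadhan theorem: for a bounded
generator `L = -S + A` on the mean-zero space `L²₀` (`S ≥ 0` self-adjoint, `A`
skew-adjoint) with resolvents `R λ = (λI - L)⁻¹` and square root `Q = S^{1/2}`, if
`λ^{1/2} ‖R_λ φ‖ → 0` and `S^{1/2} R_λ φ → v` in `L²` as `λ ↓ 0`, then
`σ² := 2 lim_{λ→0} ⟨φ, R_λ φ⟩` exists, is finite, and equals `2‖v‖²`. -/
theorem kipnis_varadhan_variance_limit
    (H : Type*) [NormedAddCommGroup H] [InnerProductSpace ℝ H] [CompleteSpace H]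
    (L S A : H →L[ℝ] H)
    (hSsa : IsSelfAdjoint S)
    (hSpos : ∀ f : H, 0 ≤ ⟪S f, f⟫)
    (hAskew : ContinuousLinearMap.adjoint A = -A)
    (hL : L = -S + A)
    (R : ℝ → H →L[ℝ] H)
    (hR : ∀ l : ℝ, 0 < l →
      (l • (1 : H →L[ℝ] H) - L) ∘L R l = 1 ∧ R l ∘L (l • (1 : H →L[ℝ] H) - L) = 1)
    (Q : H →L[ℝ] H) (hQsa : IsSelfAdjoint Q)
    (hQpos : ∀ f : H, 0 ≤ ⟪Q f, f⟫)
    (hQsq : Q ∘L Q = S)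
    (φ v : H)
    (hcond1 : Tendsto (fun l : ℝ => Real.sqrt l * ‖R l φ‖)
      (nhdsWithin 0 (Set.Ioi 0)) (𝓝 0))
    (hcond2 : Tendsto (fun l : ℝ => Q (R l φ)) (nhdsWithin 0 (Set.Ioi 0)) (𝓝 v)) :
    Tendsto (fun l : ℝ => 2 * ⟪φ, R l φ⟫) (nhdsWithin 0 (Set.Ioi 0))
      (𝓝 (2 * ‖v‖ ^ 2)) := by
  -- A is skew: ⟪A f, f⟫ = 0
  have hA0 : ∀ f : H, ⟪A f, f⟫ = 0 := by
    intro f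
    have h1 : ⟪A f, f⟫ = ⟪f, ContinuousLinearMap.adjoint A f⟫ :=
      (ContinuousLinearMap.adjoint_inner_right A f f).symm
    rw [hAskew] at h1
    simp only [ContinuousLinearMap.neg_apply, inner_neg_right] at h1
    rw [real_inner_comm] at h1 ⊢
    linarith
  -- key identity
  have key : ∀ l : ℝ, 0 < l →
      2 * ⟪φ, R l φ⟫ = 2 * ((Real.sqrt l * ‖R l φ‖) ^ 2 + ‖Q (R l φ)‖ ^ 2) := by
    intro l hl
    set f := R l φ with hf
    have hφ : φ = l • f - L f := by
      have := (hR l hl).1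
      have h := congrArg (fun T => T φ) this
      simpa [ContinuousLinearMap.comp_apply, ContinuousLinearMap.sub_apply,
        ContinuousLinearMap.smul_apply, sub_eq_iff_eq_add] using h.symm
    have hSf : ⟪S f, f⟫ = ‖Q f‖ ^ 2 := by
      have : S f = Q (Q f) := by rw [← hQsq]; rfl
      rw [this]
      have h2 : ⟪Q (Q f), f⟫ = ⟪Q f, Q f⟫ := by
        conv_lhs => rw [← hQsa.adjoint_eq, ContinuousLinearMap.adjoint_inner_left]
        rw [hQsa.adjoint_eq]
      rw [h2, real_inner_self_eq_norm_sq]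
    have hinner : ⟪φ, f⟫ = l * ‖f‖ ^ 2 + ‖Q f‖ ^ 2 := by
      rw [hφ]
      rw [inner_sub_left, real_inner_smul_left, hL]
      simp only [ContinuousLinearMap.add_apply, ContinuousLinearMap.neg_apply]
      rw [inner_add_left, inner_neg_left, hSf, hA0, real_inner_self_eq_norm_sq]
      ring
    rw [hinner, mul_pow, Real.sq_sqrt hl.le]
  have hsq : Tendsto (fun l : ℝ => 2 * ((Real.sqrt l * ‖R l φ‖) ^ 2 + ‖Q (R l φ)‖ ^ 2))
      (nhdsWithin 0 (Set.Ioi 0)) (𝓝 (2 * ‖v‖ ^ 2)) := by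
    have h1 : Tendsto (fun l : ℝ => (Real.sqrt l * ‖R l φ‖) ^ 2)
        (nhdsWithin 0 (Set.Ioi 0)) (𝓝 0) := by
      simpa using hcond1.pow 2
    have h2 : Tendsto (fun l : ℝ => ‖Q (R l φ)‖ ^ 2)
        (nhdsWithin 0 (Set.Ioi 0)) (𝓝 (‖v‖ ^ 2)) :=
      (hcond2.norm).pow 2
    have := (h1.add h2).const_mul (2 : ℝ)
    simpa using this
  refine hsq.congr' ?_
  filter_upwards [self_mem_nhdsWithin] with l hl
  exact (key l hl).symm
end
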